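/- (Weight-zero case of the paper's Corollary on the module structure of the p-saturated filtration.) For all integers r ≥ 0 and n ≥ 1: Fil^p_r Wₙ(L) is a Wₙ(O)-submodule of Wₙ(L), and one has the inclusions Wₙ(O) ⊆ Fil^p_r Wₙ(L) ⊆ [z]^{−r·p^{n−1}}·Wₙ(O); equivalently, [z^{r·p^{n−1}}]·Fil^p_r Wₙ(L) ⊆ Wₙ(O), where [·] denotes the Teichmüller lift. -/

import Mathlib

noncomputable section

open scoped Classical

/-- A discretely valued field: a field `L` together with a normalized additive valuation
`v : L → ℤ ∪ {∞}` and a uniformizer `z` (so `v z = 1`).  The valuation ring is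
`O = {a : L | 0 ≤ v a}`, with maximal ideal `𝔪 = {a : L | 1 ≤ v a}`. -/
structure DVField (L : Type) [Field L] : Type where
  v : L → WithTop ℤ
  z : L
  v_top : ∀ a : L, v a = ⊤ ↔ a = 0
  v_mul : ∀ a b : L, v (a * b) = v a + v b
  v_add : ∀ a b : L, min (v a) (v b) ≤ v (a + b)
  v_z : v z = 1

namespace DVField

variable {L : Type} [Field L]

/-- `Wₙ(O) ⊆ Wₙ(L)`: the truncated Witt vectors all of whose components are integral. -/
def WO (D : DVField L) (p n : ℕ) : Set (TruncatedWittVector p n L) :=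
  {x | ∀ i : Fin n, 0 ≤ D.v (x.coeff i)}

/-- The Brylinski–Kato filtration
`fil^log_r Wₙ(L) = {(a₀, …, a_{n-1}) | p^{n-1-i} · v(aᵢ) ≥ -r for all i}`. -/
def filLog (D : DVField L) (p r n : ℕ) : Set (TruncatedWittVector p n L) :=
  {x | ∀ i : Fin n, (↑(-(r : ℤ)) : WithTop ℤ) ≤ p ^ (n - 1 - (i : ℕ)) • D.v (x.coeff i)}

end DVField

/-- The Verschiebung `V : Wₙ(L) → W_{n+1}(L)`, shifting components. -/
def wV {p : ℕ} {L : Type} [Field L] {n : ℕ} (x : TruncatedWittVector p n L) :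
    TruncatedWittVector p (n + 1) L :=
  TruncatedWittVector.mk p fun i =>
    if h : (i : ℕ) = 0 then 0 else x.coeff ⟨(i : ℕ) - 1, by have := i.isLt; omega⟩

/-- The iterated Verschiebung `V^{n-m} : W_m(L) → Wₙ(L)` (for `m ≤ n`), given by shifting
components by `n - m`. -/
def wVit {p : ℕ} {L : Type} [Field L] {m n : ℕ} (x : TruncatedWittVector p m L) :
    TruncatedWittVector p n L :=
  TruncatedWittVector.mk p fun i =>
    if h : n - m ≤ (i : ℕ) ∧ (i : ℕ) - (n - m) < m then x.coeff ⟨(i : ℕ) - (n - m), h.2⟩ else 0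

/-- The restriction `R : W_{n+1}(L) → Wₙ(L)`, dropping the last component. -/
def wR {p : ℕ} {L : Type} [Field L] {n : ℕ} (x : TruncatedWittVector p (n + 1) L) :
    TruncatedWittVector p n L :=
  TruncatedWittVector.mk p fun i => x.coeff i.castSucc

/-- The iterated restriction `R^{m-n} : W_m(L) → Wₙ(L)` (for `n ≤ m`), keeping the first `n`
components. -/
def wRes {p : ℕ} {L : Type} [Field L] {m n : ℕ} (x : TruncatedWittVector p m L) :
    TruncatedWittVector p n L :=
  TruncatedWittVector.mk p fun i => if h : (i : ℕ) < m then x.coeff ⟨(i : ℕ), h⟩ else 0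

/-- The Frobenius `F : W_{n+1}(L) → Wₙ(L)` in characteristic `p`:
componentwise `p`-th power followed by restriction. -/
def wF {p : ℕ} {L : Type} [Field L] {n : ℕ} (x : TruncatedWittVector p (n + 1) L) :
    TruncatedWittVector p n L :=
  TruncatedWittVector.mk p fun i => x.coeff i.castSucc ^ p

/-- The Teichmüller lift `[a] = (a, 0, …, 0)`. -/
def wT (p : ℕ) {L : Type} [Field L] (n : ℕ) (a : L) : TruncatedWittVector p n L :=
  TruncatedWittVector.mk p fun i => if (i : ℕ) = 0 then a else 0

/-- The map `p̲ : Wₙ(L) → W_{n+1}(L)`: lift to length `n+1` (by appending a zero component)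
and multiply by `p`. -/
def wP {p : ℕ} [Fact p.Prime] {L : Type} [Field L] {n : ℕ} (x : TruncatedWittVector p n L) :
    TruncatedWittVector p (n + 1) L :=
  p • (wRes x : TruncatedWittVector p (n + 1) L)

namespace DVField

variable {L : Type} [Field L]

/-- The Kato–Matsuda filtration
`fil_r Wₙ(L) = fil^log_{r-1} Wₙ(L) + V^{n-m}(fil^log_r W_m(L))` where `m = min(v_p(r), n)`,
and `fil_0 Wₙ(L) = Wₙ(O)`. -/
def filKM (D : DVField L) (p : ℕ) [Fact p.Prime] (r n : ℕ) :
    Set (TruncatedWittVector p n L) :=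
  if r = 0 then D.WO p n
  else {x | ∃ a ∈ D.filLog p (r - 1) n,
    ∃ b ∈ D.filLog p r (min (padicValNat p r) n), x = a + wVit b}

/-- The `p`-saturation `Fil^p_r Wₙ(L) = Σ_{s=0}^{n-1} p^s · fil_{r·p^s} Wₙ(L)`. -/
def FilP (D : DVField L) (p : ℕ) [Fact p.Prime] (r n : ℕ) :
    Set (TruncatedWittVector p n L) :=
  {x | ∃ f : Fin n → TruncatedWittVector p n L,
      (∀ s : Fin n, f s ∈ D.filKM p (r * p ^ (s : ℕ)) n) ∧
      x = ∑ s : Fin n, p ^ (s : ℕ) • f s}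

end DVField

/-!
In characteristic `p` the Witt vector Frobenius is the coordinatewise `p`-th power, and
multiplying by a Teichmüller lift `[c]` scales the `i`-th coordinate by `c ^ p ^ i`. Hence
`x ∈ fil^log_r Wₙ(L)` exactly when `[z^r] · F^{n-1}(x)` has integral coordinates. As
`x ↦ [z^r] · F^{n-1}(x)` is additive and `F^{n-1}`-semilinear over `Wₙ(O)`, and `F` preserves
`Wₙ(O)`, this makes `fil^log_r` a `Wₙ(O)`-submodule. The image of `fil^log_r W_m(L)` under
`V^{n-m}` is `fil^log_r Wₙ(L)` intersected with the ideal of vectors whose first `n - m`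
coordinates vanish, so `fil_r` and then `Fil^p_r` are submodules as well. Finally
`fil_{r p^s} ⊆ fil^log_{r p^{n-1}}` for `s < n`, and `[z^R]` makes every element of
`fil^log_R` integral coordinatewise.
-/

namespace WittVector

variable {p : ℕ} [Fact p.Prime] {R : Type*} [CommRing R]

theorem coeff_teichmuller_add_verschiebung (a : R) (y : WittVector p R) (i : ℕ) :
    (teichmuller p a + verschiebung y).coeff i = if i = 0 then a else y.coeff (i - 1) := by
  have hdisj : ∀ j, (teichmuller p a).coeff j = 0 ∨ (verschiebung y).coeff j = 0 := fun j => by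
    rcases j with _ | j
    · exact Or.inr (verschiebung_coeff_zero y)
    · exact Or.inl (teichmuller_coeff_pos p a _ j.succ_pos)
  rw [coeff_add_of_disjoint i _ _ hdisj]
  rcases i with _ | i
  · simp [teichmuller_coeff_zero]
  · simp [teichmuller_coeff_pos p a _ i.succ_pos, verschiebung_coeff_succ]

theorem eq_teichmuller_add_verschiebung_shift (x : WittVector p R) :
    x = teichmuller p (x.coeff 0) + verschiebung (x.shift 1) := by
  ext i
  rw [coeff_teichmuller_add_verschiebung]
  rcases i with _ | i
  · rfl
  · simp [shift_coeff, add_comm]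

theorem teichmuller_mul_eq [CharP R p] (c : R) (x : WittVector p R) :
    teichmuller p c * x =
      teichmuller p (c * x.coeff 0) + verschiebung (teichmuller p (c ^ p) * x.shift 1) := by
  conv_lhs => rw [eq_teichmuller_add_verschiebung_shift x]
  rw [mul_add, ← map_mul, mul_comm (teichmuller p c) (verschiebung _),
    ← verschiebung_mul_frobenius, frobenius_eq_map_frobenius, map_teichmuller, frobenius_def,
    mul_comm (x.shift 1)]

theorem teichmuller_mul_coeff [CharP R p] (c : R) (x : WittVector p R) (i : ℕ) :
    (teichmuller p c * x).coeff i = c ^ p ^ i * x.coeff i := by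
  induction i generalizing c x with
  | zero =>
    rw [teichmuller_mul_eq, coeff_teichmuller_add_verschiebung, if_pos rfl, pow_zero, pow_one]
  | succ i ih =>
    rw [teichmuller_mul_eq, coeff_teichmuller_add_verschiebung, if_neg i.succ_ne_zero,
      Nat.add_sub_cancel, ih, shift_coeff, ← pow_mul, ← pow_succ', add_comm]

end WittVector

namespace TruncatedWittVector

variable {p : ℕ} [Fact p.Prime] {n : ℕ} {R S : Type*} [CommRing R] [CommRing S]

def map (f : R →+* S) : TruncatedWittVector p n R →+* TruncatedWittVector p n S :=
  (WittVector.truncate n).liftOfSurjective (WittVector.truncate_surjective p n R)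
    ⟨(WittVector.truncate n).comp (WittVector.map f), fun x hx => by
      rw [WittVector.mem_ker_truncate] at hx
      rw [RingHom.mem_ker, RingHom.comp_apply, ← RingHom.mem_ker, WittVector.mem_ker_truncate]
      intro i hi
      rw [WittVector.map_coeff, hx i hi, map_zero]⟩

@[simp]
theorem coeff_map (f : R →+* S) (x : TruncatedWittVector p n R) (i : Fin n) :
    (map f x).coeff i = f (x.coeff i) := by
  obtain ⟨y, rfl⟩ := WittVector.truncate_surjective p n R x
  rw [map, RingHom.liftOfSurjective_comp_apply, RingHom.comp_apply, WittVector.coeff_truncate,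
    WittVector.coeff_truncate, WittVector.map_coeff]

theorem mem_ker_truncate {k : ℕ} (hk : k ≤ n) (x : TruncatedWittVector p n R) :
    x ∈ RingHom.ker (truncate hk) ↔ ∀ i : Fin n, (i : ℕ) < k → x.coeff i = 0 := by
  rw [RingHom.mem_ker]
  constructor
  · intro h i hi
    simpa using congrArg (coeff ⟨i, hi⟩) h
  · intro h
    ext i
    simpa [coeff_truncate] using h _ i.isLt

end TruncatedWittVector

namespace WithTop

theorem nsmul_top_of_ne_zero {α : Type*} [AddMonoid α] {k : ℕ} (hk : k ≠ 0) :
    k • (⊤ : WithTop α) = ⊤ := by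
  obtain ⟨k, rfl⟩ := Nat.exists_eq_succ_of_ne_zero hk
  rw [succ_nsmul, add_top]

theorem nsmul_nonneg_iff {k : ℕ} (hk : k ≠ 0) {a : WithTop ℤ} :
    0 ≤ k • a ↔ 0 ≤ a := by
  induction a using WithTop.recTopCoe with
  | top => simp [nsmul_top_of_ne_zero hk]
  | coe b =>
    rw [← coe_nsmul, ← coe_zero, coe_le_coe, coe_le_coe, nsmul_eq_mul]
    exact mul_nonneg_iff_of_pos_left (by omega)

theorem coe_add_nonneg_iff (c : ℤ) (a : WithTop ℤ) :
    0 ≤ (c : WithTop ℤ) + a ↔ ((-c : ℤ) : WithTop ℤ) ≤ a := by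
  induction a using WithTop.recTopCoe with
  | top => simp
  | coe b =>
    norm_cast
    omega

end WithTop

theorem wT_eq_truncate_teichmuller {p : ℕ} [Fact p.Prime] {L : Type} [Field L] (n : ℕ) (c : L) :
    wT p n c = WittVector.truncate n (WittVector.teichmuller p c) := by
  ext i
  rw [wT, TruncatedWittVector.coeff_mk, WittVector.coeff_truncate]
  split_ifs with hi
  · rw [hi, WittVector.teichmuller_coeff_zero]
  · rw [WittVector.teichmuller_coeff_pos p c _ (Nat.pos_of_ne_zero hi)]

theorem coeff_wT_mul {p : ℕ} [Fact p.Prime] {L : Type} [Field L] [CharP L p] {n : ℕ} (c : L)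
    (x : TruncatedWittVector p n L) (i : Fin n) :
    (wT p n c * x).coeff i = c ^ p ^ (i : ℕ) * x.coeff i := by
  have h : wT p n c * x = WittVector.truncate n (WittVector.teichmuller p c * x.out) := by
    rw [map_mul, ← wT_eq_truncate_teichmuller]
    exact congrArg _ (TruncatedWittVector.truncateFun_out x).symm
  rw [h, WittVector.coeff_truncate, WittVector.teichmuller_mul_coeff,
    TruncatedWittVector.coeff_out]

namespace DVField

variable {L : Type} [Field L] (D : DVField L)

theorem v_zero : D.v 0 = ⊤ := (D.v_top 0).2 rfl

theorem v_one : D.v 1 = 0 := by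
  have h1 : D.v 1 ≠ ⊤ := fun h => one_ne_zero ((D.v_top 1).1 h)
  have h := D.v_mul 1 1
  rw [one_mul] at h
  lift D.v 1 to ℤ using h1 with a
  norm_cast at h ⊢
  omega

def toAddValuation : AddValuation L (WithTop ℤ) :=
  AddValuation.of D.v D.v_zero D.v_one D.v_add D.v_mul

theorem v_neg (a : L) : D.v (-a) = D.v a := D.toAddValuation.map_neg a

theorem v_pow (a : L) (k : ℕ) : D.v (a ^ k) = k • D.v a := D.toAddValuation.map_pow a k

theorem v_z_pow (k : ℕ) : D.v (D.z ^ k) = ((k : ℤ) : WithTop ℤ) := by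
  rw [v_pow, v_z, ← WithTop.coe_one, ← WithTop.coe_nsmul, nsmul_one]

def integers : Subring L where
  carrier := {a | 0 ≤ D.v a}
  mul_mem' {a b} ha hb := show 0 ≤ D.v (a * b) from D.v_mul a b ▸ add_nonneg ha hb
  one_mem' := D.v_one.ge
  add_mem' {a b} ha hb := (le_min ha hb).trans (D.v_add a b)
  zero_mem' := show 0 ≤ D.v 0 from D.v_zero ▸ le_top
  neg_mem' {a} ha := show 0 ≤ D.v (-a) from (D.v_neg a).symm ▸ ha

variable (p : ℕ) [hp : Fact p.Prime]

def wittIntegers (n : ℕ) : Subring (TruncatedWittVector p n L) :=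
  (TruncatedWittVector.map D.integers.subtype).range

variable {D p} {n : ℕ}

theorem mem_wittIntegers {x : TruncatedWittVector p n L} :
    x ∈ D.wittIntegers p n ↔ x ∈ D.WO p n := by
  constructor
  · rintro ⟨y, rfl⟩ i
    rw [TruncatedWittVector.coeff_map]
    exact (y.coeff i).2
  · intro hx
    refine ⟨TruncatedWittVector.mk p fun i => ⟨x.coeff i, hx i⟩, ?_⟩
    ext i
    rw [TruncatedWittVector.coeff_map, TruncatedWittVector.coeff_mk]
    rfl

theorem mem_filLog_zero_iff {x : TruncatedWittVector p n L} :
    x ∈ D.filLog p 0 n ↔ x ∈ D.wittIntegers p n := by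
  rw [mem_wittIntegers]
  refine forall_congr' fun i => ?_
  rw [Nat.cast_zero, neg_zero, WithTop.coe_zero,
    WithTop.nsmul_nonneg_iff (pow_ne_zero _ hp.out.ne_zero)]

theorem mem_wVit_image_filLog_iff {m : ℕ} (hm : m ≤ n) {r : ℕ}
    {x : TruncatedWittVector p n L} :
    x ∈ (wVit '' D.filLog p r m : Set (TruncatedWittVector p n L)) ↔
      x ∈ RingHom.ker (TruncatedWittVector.truncate (Nat.sub_le n m)) ∧
        x ∈ D.filLog p r n := by
  rw [TruncatedWittVector.mem_ker_truncate]
  constructor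
  · rintro ⟨b, hb, rfl⟩
    refine ⟨fun i hi => ?_, fun i => ?_⟩
    · rw [wVit, TruncatedWittVector.coeff_mk, dif_neg (by omega)]
    · rw [wVit, TruncatedWittVector.coeff_mk]
      split_ifs with hc
      · have he : m - 1 - ((i : ℕ) - (n - m)) = n - 1 - i := by omega
        rw [← he]
        exact hb _
      · rw [v_zero, WithTop.nsmul_top_of_ne_zero (pow_ne_zero _ hp.out.ne_zero)]
        exact le_top
  · rintro ⟨hker, hx⟩
    refine ⟨TruncatedWittVector.mk p fun j => x.coeff ⟨j + (n - m), by omega⟩,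
      fun j => ?_, ?_⟩
    · have he : n - 1 - ((j : ℕ) + (n - m)) = m - 1 - j := by omega
      rw [TruncatedWittVector.coeff_mk, ← he]
      exact hx _
    · ext i
      rw [wVit, TruncatedWittVector.coeff_mk]
      split_ifs with hc
      · rw [TruncatedWittVector.coeff_mk]
        congr 1
        ext
        simp only
        omega
      · exact (hker i (by omega)).symm

section CharP

variable [CharP L p]

theorem map_iterateFrobenius_mem_wittIntegers (k : ℕ) {a : TruncatedWittVector p n L}
    (ha : a ∈ D.wittIntegers p n) :
    TruncatedWittVector.map (iterateFrobenius L p k) a ∈ D.wittIntegers p n := by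
  rw [mem_wittIntegers] at ha ⊢
  intro i
  rw [TruncatedWittVector.coeff_map, iterateFrobenius_def, v_pow]
  exact nsmul_nonneg (ha i) _

theorem mem_filLog_iff_wT_mul_map_iterateFrobenius_mem {r : ℕ} {x : TruncatedWittVector p n L} :
    x ∈ D.filLog p r n ↔
      wT p n (D.z ^ r) * TruncatedWittVector.map (iterateFrobenius L p (n - 1)) x ∈
        D.wittIntegers p n := by
  rw [mem_wittIntegers]
  refine forall_congr' fun i => ?_
  have hpow : p ^ (n - 1) = p ^ (i : ℕ) * p ^ (n - 1 - i) := by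
    rw [← pow_add]
    congr 1
    omega
  rw [coeff_wT_mul, TruncatedWittVector.coeff_map, iterateFrobenius_def, D.v_mul, ← pow_mul,
    v_z_pow, v_pow, hpow, mul_nsmul', Nat.cast_mul, mul_comm, ← nsmul_eq_mul, WithTop.coe_nsmul,
    ← nsmul_add, WithTop.nsmul_nonneg_iff (pow_ne_zero _ hp.out.ne_zero),
    WithTop.coe_add_nonneg_iff]

variable (D p) in
def filLogSubmodule (r n : ℕ) : Submodule (D.wittIntegers p n) (TruncatedWittVector p n L) where
  carrier := D.filLog p r n
  zero_mem' := by
    rw [mem_filLog_iff_wT_mul_map_iterateFrobenius_mem, map_zero, mul_zero]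
    exact zero_mem _
  add_mem' {x y} hx hy := by
    rw [mem_filLog_iff_wT_mul_map_iterateFrobenius_mem] at hx hy ⊢
    rw [map_add, mul_add]
    exact add_mem hx hy
  smul_mem' a x hx := by
    rw [mem_filLog_iff_wT_mul_map_iterateFrobenius_mem] at hx ⊢
    rw [Subring.smul_def, smul_eq_mul, map_mul, mul_left_comm]
    exact mul_mem (map_iterateFrobenius_mem_wittIntegers _ a.2) hx

theorem mem_filLogSubmodule {r : ℕ} {x : TruncatedWittVector p n L} :
    x ∈ D.filLogSubmodule p r n ↔ x ∈ D.filLog p r n := Iff.rfl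

theorem filLogSubmodule_mono {r r' : ℕ} (h : r ≤ r') :
    D.filLogSubmodule p r n ≤ D.filLogSubmodule p r' n := fun _ hx i =>
  (WithTop.coe_le_coe.2 (by omega)).trans (hx i)

theorem wT_z_pow_mul_mem_wittIntegers {r : ℕ} {x : TruncatedWittVector p n L}
    (hx : x ∈ D.filLog p r n) : wT p n (D.z ^ r) * x ∈ D.wittIntegers p n := by
  rw [mem_wittIntegers]
  intro i
  rw [coeff_wT_mul, D.v_mul, ← pow_mul, v_z_pow, WithTop.coe_add_nonneg_iff]
  have hK : (1 : ℤ) ≤ (p ^ (n - 1 - i) : ℕ) := by exact_mod_cast Nat.one_le_pow _ _ hp.out.pos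
  have hQ : (1 : ℤ) ≤ (p ^ (i : ℕ) : ℕ) := by exact_mod_cast Nat.one_le_pow _ _ hp.out.pos
  have h := hx i
  generalize D.v (x.coeff i) = a at h ⊢
  induction a using WithTop.recTopCoe with
  | top => exact le_top
  | coe b =>
    rw [← WithTop.coe_nsmul, WithTop.coe_le_coe, nsmul_eq_mul] at h
    rw [WithTop.coe_le_coe, Nat.cast_mul]
    rcases le_or_gt 0 b with hb | hb <;> nlinarith

variable (D p) in
/-- The second summand is `V^{n-m}(fil^log_r W_m(L))`, see `mem_wVit_image_filLog_iff`. -/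
def filKMSubmodule (r n : ℕ) : Submodule (D.wittIntegers p n) (TruncatedWittVector p n L) :=
  if r = 0 then D.filLogSubmodule p 0 n
  else D.filLogSubmodule p (r - 1) n ⊔
    ((RingHom.ker (TruncatedWittVector.truncate (Nat.sub_le n (min (padicValNat p r) n)))
      ).restrictScalars (D.wittIntegers p n) ⊓ D.filLogSubmodule p r n)

theorem mem_filKMSubmodule {r : ℕ} {x : TruncatedWittVector p n L} :
    x ∈ D.filKMSubmodule p r n ↔ x ∈ D.filKM p r n := by
  rw [filKMSubmodule, filKM]
  split_ifs
  · exact mem_filLog_zero_iff.trans mem_wittIntegers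
  · simp only [Submodule.mem_sup, Submodule.mem_inf, Submodule.restrictScalars_mem,
      mem_filLogSubmodule, ← mem_wVit_image_filLog_iff (min_le_right _ n)]
    constructor
    · rintro ⟨a, ha, _, ⟨b, hb, rfl⟩, rfl⟩
      exact ⟨a, ha, b, hb, rfl⟩
    · rintro ⟨a, ha, b, hb, rfl⟩
      exact ⟨a, ha, _, ⟨b, hb, rfl⟩, rfl⟩

theorem filKMSubmodule_le_filLogSubmodule (r : ℕ) :
    D.filKMSubmodule p r n ≤ D.filLogSubmodule p r n := by
  rw [filKMSubmodule]
  split_ifs with hr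
  · rw [hr]
  · exact sup_le (filLogSubmodule_mono (Nat.sub_le r 1)) inf_le_right

theorem filLogSubmodule_zero_le_filKMSubmodule (r : ℕ) :
    D.filLogSubmodule p 0 n ≤ D.filKMSubmodule p r n := by
  rw [filKMSubmodule]
  split_ifs
  · exact le_rfl
  · exact le_sup_of_le_left (filLogSubmodule_mono (Nat.zero_le _))

variable (D p) in
def filPSubmodule (r n : ℕ) : Submodule (D.wittIntegers p n) (TruncatedWittVector p n L) where
  carrier := D.FilP p r n
  zero_mem' := ⟨0, fun _ => mem_filKMSubmodule.1 (zero_mem _), by simp⟩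
  add_mem' := by
    rintro _ _ ⟨f, hf, rfl⟩ ⟨g, hg, rfl⟩
    refine ⟨f + g, fun s => mem_filKMSubmodule.1 (add_mem
      (mem_filKMSubmodule.2 (hf s)) (mem_filKMSubmodule.2 (hg s))), ?_⟩
    simp only [Pi.add_apply, smul_add, Finset.sum_add_distrib]
  smul_mem' := by
    rintro a _ ⟨f, hf, rfl⟩
    refine ⟨a • f, fun s => mem_filKMSubmodule.1
      (Submodule.smul_mem _ a (mem_filKMSubmodule.2 (hf s))), ?_⟩
    simp only [Pi.smul_apply, Finset.smul_sum, smul_comm a]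

theorem WO_subset_FilP (r : ℕ) : D.WO p n ⊆ D.FilP p r n := by
  intro x hx
  rcases n with _ | n
  · exact ⟨0, fun s => s.elim0, TruncatedWittVector.ext fun i => i.elim0⟩
  · refine ⟨Pi.single 0 x, fun s => mem_filKMSubmodule.1 ?_, ?_⟩
    · rcases eq_or_ne s 0 with rfl | hs
      · exact filLogSubmodule_zero_le_filKMSubmodule _
          (mem_filLog_zero_iff.2 (mem_wittIntegers.2 hx))
      · rw [Pi.single_eq_of_ne hs]
        exact zero_mem _
    · simp [Pi.single_apply]

theorem wT_z_pow_mul_mem_WO_of_mem_FilP {r : ℕ} {x : TruncatedWittVector p n L}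
    (hx : x ∈ D.FilP p r n) : wT p n (D.z ^ (r * p ^ (n - 1))) * x ∈ D.WO p n := by
  obtain ⟨f, hf, rfl⟩ := hx
  rw [← mem_wittIntegers, Finset.mul_sum]
  refine sum_mem fun s _ => ?_
  rw [mul_smul_comm]
  refine nsmul_mem (wT_z_pow_mul_mem_wittIntegers (filLogSubmodule_mono ?_
    (filKMSubmodule_le_filLogSubmodule _ (mem_filKMSubmodule.2 (hf s))))) _
  exact Nat.mul_le_mul_left r (Nat.pow_le_pow_right hp.out.pos (by omega))

end CharP

end DVField

theorem statement6_general (p : ℕ) [Fact p.Prime] (L : Type) [Field L] [CharP L p]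
    (D : DVField L) (r n : ℕ) :
    ((0 : TruncatedWittVector p n L) ∈ D.FilP p r n ∧
      (∀ x ∈ D.FilP p r n, ∀ y ∈ D.FilP p r n, x + y ∈ D.FilP p r n) ∧
      (∀ x ∈ D.FilP p r n, -x ∈ D.FilP p r n) ∧
      (∀ a ∈ D.WO p n, ∀ x ∈ D.FilP p r n, a * x ∈ D.FilP p r n)) ∧
    D.WO p n ⊆ D.FilP p r n ∧
    (∀ x ∈ D.FilP p r n, wT p n (D.z ^ (r * p ^ (n - 1))) * x ∈ D.WO p n) :=
  ⟨⟨(D.filPSubmodule p r n).zero_mem, fun _ hx _ hy => (D.filPSubmodule p r n).add_mem hx hy,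
    fun _ hx => (D.filPSubmodule p r n).neg_mem hx,
    fun a ha _ hx => (D.filPSubmodule p r n).smul_mem ⟨a, DVField.mem_wittIntegers.2 ha⟩ hx⟩,
    DVField.WO_subset_FilP r, fun _ hx => DVField.wT_z_pow_mul_mem_WO_of_mem_FilP hx⟩

/-- (Weight-zero module structure of the `p`-saturated filtration.)
For all `r ≥ 0` and `n ≥ 1`: `Fil^p_r Wₙ(L)` is a `Wₙ(O)`-submodule of `Wₙ(L)`, and
`Wₙ(O) ⊆ Fil^p_r Wₙ(L) ⊆ [z]^{-r·p^{n-1}} · Wₙ(O)`, equivalently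
`[z^{r·p^{n-1}}] · Fil^p_r Wₙ(L) ⊆ Wₙ(O)`. -/
theorem statement6 (p : ℕ) [Fact p.Prime] (L : Type) [Field L] [CharP L p]
    (D : DVField L) (r n : ℕ) (hn : 1 ≤ n) :
    ((0 : TruncatedWittVector p n L) ∈ D.FilP p r n ∧
      (∀ x ∈ D.FilP p r n, ∀ y ∈ D.FilP p r n, x + y ∈ D.FilP p r n) ∧
      (∀ x ∈ D.FilP p r n, -x ∈ D.FilP p r n) ∧
      (∀ a ∈ D.WO p n, ∀ x ∈ D.FilP p r n, a * x ∈ D.FilP p r n)) ∧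
    D.WO p n ⊆ D.FilP p r n ∧
    (∀ x ∈ D.FilP p r n, wT p n (D.z ^ (r * p ^ (n - 1))) * x ∈ D.WO p n) :=
  statement6_general p L D r n
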